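/- Let f : [−1,1]² → ℝ be the bump function defined by f(x₁,x₂) = exp(1 − 1/(1 − 4x₁²)) if |x₁| < 1/2 and f(x₁,x₂) = 0 if |x₁| ≥ 1/2. Then for every fully connected binarized neural network with one hidden layer and input dimension 2, with output function O, one has sup_{x ∈ [−1,1]²} |O(x) − f(x)| ≥ 1/2. In particular, no single-hidden-layer fully connected BNN can approximate f uniformly to accuracy better than 1/2. -/

import Mathlib

/-- The binarized activation function with threshold `θ`:
`σ θ t = 1` if `t > θ`, and `-1` otherwise. -/
noncomputable def binAct (θ t : ℝ) : ℝ := if t > θ then 1 else -1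

/-!
On the four points `±e₀`, `±e₁` of the square, every hidden neuron sees the input `±1`, because
its weights are `±1`; hence `O e₁ + O (-e₁) = O e₀ + O (-e₀)`. The bump takes the values `1, 1`
at `±e₁` and `0, 0` at `±e₀`, so the four errors add up to at least `2` and one of them is at
least `1/2`.
-/

open Finset

lemma abs_binAct_le_one (θ t : ℝ) : |binAct θ t| ≤ 1 := by
  unfold binAct
  split_ifs <;> simp

lemma add_apply_neg_of_eq_one_or_eq_neg_one (g : ℝ → ℝ) {w : ℝ} (hw : w = 1 ∨ w = -1) :
    g w + g (-w) = g 1 + g (-1) := by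
  rcases hw with rfl | rfl
  · rfl
  · rw [neg_neg, add_comm]

lemma abs_sub_add_le_of_add_eq {A B C D a b c d : ℝ} (h : A + B = C + D) :
    |a + b - (c + d)| ≤ |A - a| + |B - b| + |C - c| + |D - d| := by
  calc |a + b - (c + d)| = |(C - c) + (D - d) - (A - a) - (B - b)| := by
        congr 1; linarith
    _ ≤ |A - a| + |B - b| + |C - c| + |D - d| := by
        have := abs_sub (C - c + (D - d) - (A - a)) (B - b)
        have := abs_sub (C - c + (D - d)) (A - a)
        have := abs_add_le (C - c) (D - d)
        linarith

/-- The profile of the bump function: `f x = bump (x 0)`. -/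
noncomputable def bump (t : ℝ) : ℝ :=
  if |t| < 1 / 2 then Real.exp (1 - 1 / (1 - 4 * t ^ 2)) else 0

lemma bump_zero : bump 0 = 1 := by
  norm_num [bump]

lemma bump_of_half_le_abs {t : ℝ} (ht : 1 / 2 ≤ |t|) : bump t = 0 := by
  rw [bump, if_neg ht.not_gt]

lemma abs_bump_le_one (t : ℝ) : |bump t| ≤ 1 := by
  unfold bump
  split_ifs with ht
  · have hsq : 4 * t ^ 2 < 1 := by
      nlinarith [abs_lt.1 ht, sq_abs t]
    have hexp : 1 - 1 / (1 - 4 * t ^ 2) ≤ 0 := by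
      rw [sub_nonpos, le_div_iff₀ (by linarith)]
      nlinarith [sq_nonneg t]
    rw [abs_of_pos (Real.exp_pos _)]
    exact Real.exp_le_one_iff.2 hexp
  · simp

section Network

variable {d n : ℕ} (W : Fin d → Fin n → ℝ) (θ v : Fin n → ℝ)

noncomputable def bnnOutput (x : Fin d → ℝ) : ℝ :=
  ∑ j, v j * binAct (θ j) (∑ i, W i j * x i)

lemma abs_bnnOutput_le (x : Fin d → ℝ) : |bnnOutput W θ v x| ≤ ∑ j, |v j| := by
  refine (abs_sum_le_sum_abs _ _).trans (sum_le_sum fun j _ => ?_)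
  rw [abs_mul]
  exact mul_le_of_le_one_right (abs_nonneg _) (abs_binAct_le_one _ _)

lemma bnnOutput_single (k : Fin d) (c : ℝ) :
    bnnOutput W θ v (Pi.single k c) = ∑ j, v j * binAct (θ j) (W k j * c) := by
  simp only [bnnOutput, Pi.single_apply, mul_ite, mul_zero, sum_ite_eq', mem_univ, if_true]

variable {W}

lemma bnnOutput_single_add_single_neg (hW : ∀ i j, W i j = 1 ∨ W i j = -1) (k : Fin d) :
    bnnOutput W θ v (Pi.single k 1) + bnnOutput W θ v (Pi.single k (-1)) =
      ∑ j, v j * (binAct (θ j) 1 + binAct (θ j) (-1)) := by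
  simp only [bnnOutput_single, mul_one, mul_neg, ← sum_add_distrib, ← mul_add]
  exact sum_congr rfl fun j _ =>
    congrArg (v j * ·) (add_apply_neg_of_eq_one_or_eq_neg_one (binAct (θ j)) (hW k j))

end Network

lemma single_mem_cube {d : ℕ} (k : Fin d) {c : ℝ} (hc : |c| ≤ 1) :
    Pi.single k c ∈ {x : Fin d → ℝ | ∀ i, x i ∈ Set.Icc (-1 : ℝ) 1} := by
  intro i
  rcases eq_or_ne i k with rfl | hik
  · simpa using abs_le.1 hc
  · simp [hik]

/-- **Negative result for single-hidden-layer fully connected BNNs on real inputs.**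
Let `f : [−1,1]² → ℝ` be the bump function `f (x₁, x₂) = exp (1 − 1/(1 − 4 x₁²))`
for `|x₁| < 1/2` and `f (x₁, x₂) = 0` for `|x₁| ≥ 1/2`. Then for every fully connected
single-hidden-layer BNN with input dimension `2` (binary hidden weights `W`, thresholds
`θ`, real output weights `v`) with output `O`, one has
`sup_{x ∈ [−1,1]²} |O x − f x| ≥ 1/2`. -/
theorem bnn_one_hidden_layer_cannot_approximate_bump
    (f : (Fin 2 → ℝ) → ℝ)
    (hf : ∀ x : Fin 2 → ℝ,
      f x = if |x 0| < 1 / 2 then Real.exp (1 - 1 / (1 - 4 * (x 0) ^ 2)) else 0)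
    (n : ℕ) (W : Fin 2 → Fin n → ℝ) (θ : Fin n → ℝ) (v : Fin n → ℝ)
    (hW : ∀ i j, W i j = 1 ∨ W i j = -1)
    (O : (Fin 2 → ℝ) → ℝ)
    (hO : ∀ x, O x = ∑ j, v j * binAct (θ j) (∑ i, W i j * x i)) :
    1 / 2 ≤ sSup ((fun x => |O x - f x|) '' {x | ∀ i, x i ∈ Set.Icc (-1 : ℝ) 1}) := by
  obtain rfl : O = bnnOutput W θ v := funext hO
  obtain rfl : f = fun x => bump (x 0) := funext hf
  have hbdd : BddAbove ((fun x => |bnnOutput W θ v x - bump (x 0)|) ''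
      {x | ∀ i, x i ∈ Set.Icc (-1 : ℝ) 1}) := by
    refine ⟨∑ j, |v j| + 1, ?_⟩
    rintro _ ⟨x, -, rfl⟩
    exact (abs_sub _ _).trans (add_le_add (abs_bnnOutput_le W θ v x) (abs_bump_le_one _))
  have herr (k : Fin 2) {c : ℝ} (hc : |c| ≤ 1) :=
    le_csSup hbdd ⟨Pi.single k c, single_mem_cube k hc, rfl⟩
  have hsum := abs_sub_add_le_of_add_eq (a := 1) (b := 1) (c := 0) (d := 0)
    ((bnnOutput_single_add_single_neg θ v hW 1).trans
      (bnnOutput_single_add_single_neg θ v hW 0).symm)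
  have h₁ := herr 1 (c := 1) (by norm_num)
  have h₂ := herr 1 (c := -1) (by norm_num)
  have h₃ := herr 0 (c := 1) (by norm_num)
  have h₄ := herr 0 (c := -1) (by norm_num)
  simp only [Pi.single_eq_same, Pi.single_eq_of_ne (zero_ne_one' (Fin 2)), bump_zero, sub_zero,
    bump_of_half_le_abs (by norm_num : (1 / 2 : ℝ) ≤ |(1 : ℝ)|),
    bump_of_half_le_abs (by norm_num : (1 / 2 : ℝ) ≤ |(-1 : ℝ)|)] at h₁ h₂ h₃ h₄
  norm_num at hsum
  linarith
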